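/- Let n ≥ 2, r ≥ 2, let s = gcd(n, r), and write n = x·s, r = y·s with gcd(x,y) = 1. If x and y have opposite parities (exactly one of them is even), then det(I_r + S_rⁿ) = 2^s. -/

import Mathlib

/-!
`Sⁿ` is a signed permutation matrix: row `i` has a single entry `±1`, in column `(i + n) mod r`.
The translation `i ↦ i + n` of `ℤ/r` splits into `s` cycles of length `y`, so `I + Sⁿ` is
conjugate to a block diagonal matrix whose `s` blocks are `I` plus a weighted `y`-cycle, each of
determinant `1 + (-1)^(y-1) · (product of the signs on the cycle)`. Going once around a cycle
advances by `y·n = x·r`, i.e. wraps around `x` times, so the signs multiply to `(-1)^x`; when `x`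
and `y` have opposite parities every block has determinant `2`.
-/

open Matrix

theorem det_one_add_cycle {R : Type*} [CommRing R] {y : ℕ} [NeZero y] (d : Fin y → R) :
    (1 + of fun i j : Fin y => if j = i + 1 then d i else 0).det
      = 1 + (-1) ^ (y - 1) * ∏ i, d i := by
  obtain ⟨m, rfl⟩ := Nat.exists_eq_add_one_of_ne_zero (NeZero.ne y)
  rw [Nat.add_sub_cancel]
  rcases m with _ | k
  · simp
  set A : Matrix (Fin (k + 2)) (Fin (k + 2)) R :=
    1 + of fun i j => if j = i + 1 then d i else 0
  have hA : ∀ i j, A i j = (if i = j then 1 else 0) + if j = i + 1 then d i else 0 :=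
    fun i j => by simp [A, one_apply]
  have hupper : (A.submatrix Fin.succ Fin.succ).det = 1 := by
    rw [det_of_isUpperTriangular]
    · simp [hA]
    · intro i j (hij : j < i)
      rw [Fin.lt_def] at hij
      simp only [submatrix_apply, hA, Fin.ext_iff, Fin.val_succ, Fin.val_add_one, Fin.val_last]
      split_ifs <;> first | omega | simp_all
  have hlower : (A.submatrix Fin.castSucc Fin.succ).det = ∏ i : Fin (k + 1), d i.castSucc := by
    rw [det_of_isLowerTriangular]
    · simp [hA, Fin.coeSucc_eq_succ, Fin.castSucc_lt_succ.ne]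
    · intro i j (hij : i < j)
      rw [Fin.lt_def] at hij
      simp only [submatrix_apply, hA, Fin.ext_iff, Fin.val_succ, Fin.val_castSucc, Fin.val_add_one,
        Fin.val_last]
      split_ifs <;> first | omega | simp_all
  rw [det_succ_column_zero, Fintype.sum_eq_add 0 (Fin.last _) (Fin.ext_iff.not.2 (by simp))]
  · have h00 : A 0 0 = 1 := by simp [hA]
    have hl0 : A (Fin.last _) 0 = d (Fin.last _) := by simp [hA]
    rw [h00, hl0, Fin.succAbove_zero, Fin.succAbove_last, hupper, hlower, Fin.prod_univ_castSucc d,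
      Fin.val_last, Fin.val_zero]
    ring
  · rintro i ⟨h0, hl⟩
    have hi0 : A i 0 = 0 := by
      have : (0 : Fin (k + 2)) ≠ i + 1 := by
        rw [Ne, Fin.ext_iff, Fin.val_add_one, if_neg hl]; simp
      simp [hA, h0, this]
    simp [hi0]

/-- Row `i` of `Sⁿ`: `X^(i+n)` reduced modulo `Xʳ + 1` is `(-1)^⌊(i+n)/r⌋ X^((i+n) mod r)`. -/
def negacyclicShift (R : Type*) [Ring R] (r n : ℕ) : Matrix (Fin r) (Fin r) R :=
  of fun i j => if ((i : ℕ) + n) % r = j then (-1) ^ (((i : ℕ) + n) / r) else 0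

section negacyclicShift

variable {R : Type*} [Ring R] {r : ℕ}

theorem negacyclicShift_zero : negacyclicShift R r 0 = 1 := by
  ext i j
  simp [negacyclicShift, one_apply, Nat.mod_eq_of_lt i.isLt, Nat.div_eq_of_lt i.isLt, Fin.ext_iff]

theorem negacyclicShift_mul (a b : ℕ) :
    negacyclicShift R r a * negacyclicShift R r b = negacyclicShift R r (a + b) := by
  ext i j
  have hr : 0 < r := i.pos
  rw [mul_apply, Finset.sum_eq_single ⟨((i : ℕ) + a) % r, Nat.mod_lt _ hr⟩]
  · have hmod : (((i : ℕ) + a) % r + b) % r = ((i : ℕ) + (a + b)) % r := by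
      rw [Nat.mod_add_mod, add_assoc]
    have hdiv : ((i : ℕ) + (a + b)) / r = ((i : ℕ) + a) / r + (((i : ℕ) + a) % r + b) / r := by
      conv_lhs => rw [← add_assoc, ← Nat.mod_add_div ((i : ℕ) + a) r]
      rw [add_right_comm, mul_comm, Nat.add_mul_div_right _ _ hr, add_comm]
    simp only [negacyclicShift, of_apply, if_true, hmod, hdiv, pow_add]
    split_ifs <;> simp
  · intro k _ hk
    simp only [negacyclicShift, of_apply]
    rw [if_neg (fun h => hk (Fin.ext h.symm)), zero_mul]
  · simp

theorem negacyclicShift_one_pow (n : ℕ) : negacyclicShift R r 1 ^ n = negacyclicShift R r n := by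
  induction n with
  | zero => exact negacyclicShift_zero.symm
  | succ n ih => rw [pow_succ, ih, negacyclicShift_mul]

theorem negacyclicShift_one_apply (i j : Fin r) :
    negacyclicShift R r 1 i j =
      if (i : ℕ) + 1 = j then 1 else if (i : ℕ) = r - 1 ∧ (j : ℕ) = 0 then -1 else 0 := by
  rcases Nat.lt_or_ge ((i : ℕ) + 1) r with hi | hi
  · simp only [negacyclicShift, of_apply, Nat.mod_eq_of_lt hi, Nat.div_eq_of_lt hi, pow_zero]
    split_ifs <;> first | rfl | omega
  · have hi' : (i : ℕ) + 1 = r := by omega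
    simp only [negacyclicShift, of_apply, hi', Nat.mod_self, Nat.div_self i.pos, pow_one]
    split_ifs <;> first | rfl | omega

end negacyclicShift

/-- Enumerates the orbits of `i ↦ i + n` on `ℤ/r`: `(t, c)` is the `t`-th step of the orbit of `c`. -/
def orbitIndex (n r : ℕ) [NeZero r] {y s : ℕ} (p : Fin y × Fin s) : Fin r :=
  Fin.ofNat r (p.2 + p.1 * n)

section orbitIndex

variable {n r y s : ℕ} [NeZero r]

theorem orbitIndex_add_one [NeZero y] (hyn : r ∣ y * n) (t : Fin y) (c : Fin s) :
    (orbitIndex n r (t + 1, c) : ℕ) = ((orbitIndex n r (t, c) : ℕ) + n) % r := by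
  obtain ⟨k, hk⟩ := hyn
  have hsplit : (c : ℕ) + ((t : ℕ) + 1) * n
      = (c + ((t : ℕ) + 1) % y * n) + (((t : ℕ) + 1) / y * k) * r := by
    calc (c : ℕ) + ((t : ℕ) + 1) * n
        = c + (((t : ℕ) + 1) % y + y * (((t : ℕ) + 1) / y)) * n := by rw [Nat.mod_add_div]
      _ = c + ((t : ℕ) + 1) % y * n + ((t : ℕ) + 1) / y * (y * n) := by ring
      _ = _ := by rw [hk]; ring
  simp only [orbitIndex, Fin.val_ofNat, Fin.val_add, Fin.val_one', Nat.add_mod_mod, Nat.mod_add_mod]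
  rw [← Nat.add_mul_mod_self_right _ (((t : ℕ) + 1) / y * k), ← hsplit]
  ring_nf

theorem orbitIndex_injective {x : ℕ} (hr : r = y * s) (hn : n = x * s) (hxy : x.Coprime y) :
    Function.Injective (orbitIndex n r : Fin y × Fin s → Fin r) := by
  rintro ⟨t, c⟩ ⟨t', c'⟩ h
  have hmod : (c : ℕ) + t * n ≡ c' + t' * n [MOD r] := Fin.val_eq_of_eq h
  have hc : c = c' := by
    have hs : (c : ℕ) + t * n ≡ c' + t' * n [MOD s] := hmod.of_dvd ⟨y, hr.trans (mul_comm _ _)⟩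
    simp only [hn, ← mul_assoc, Nat.ModEq, Nat.add_mul_mod_self_right,
      Nat.mod_eq_of_lt c.isLt, Nat.mod_eq_of_lt c'.isLt] at hs
    exact Fin.ext hs
  subst hc
  have ht : (t : ℕ) * x * s ≡ t' * x * s [MOD y * s] := by
    simpa only [hr, hn, mul_assoc] using hmod.add_left_cancel' c
  have ht' : (t : ℕ) ≡ t' [MOD y] :=
    (Nat.ModEq.mul_right_cancel' c.pos.ne' ht).cancel_right_of_coprime (Nat.coprime_comm.1 hxy)
  rw [Nat.ModEq, Nat.mod_eq_of_lt t.isLt, Nat.mod_eq_of_lt t'.isLt] at ht'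
  rw [Fin.ext ht']

end orbitIndex

theorem det_one_add_eq_prod_of_cycles {R α ι : Type*} [CommRing R] [Fintype α] [DecidableEq α]
    [Fintype ι] [DecidableEq ι] {y : ℕ} [NeZero y] (M : Matrix α α R) (e : Fin y × ι ≃ α)
    (d : Fin y × ι → R) (hM : ∀ p j, M (e p) j = if j = e (p.1 + 1, p.2) then d p else 0) :
    (1 + M).det = ∏ c, (1 + (-1) ^ (y - 1) * ∏ t, d (t, c)) := by
  have hblock : (1 + M).submatrix e e
      = blockDiagonal fun c => 1 + of fun t t' => if t' = t + 1 then d (t, c) else 0 := by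
    ext ⟨t, c⟩ ⟨t', c'⟩
    simp only [submatrix_apply, Matrix.add_apply, hM, blockDiagonal_apply, one_apply, of_apply,
      e.apply_eq_iff_eq, Prod.ext_iff]
    by_cases hc : c = c' <;> simp [hc, eq_comm]
  rw [← det_submatrix_equiv_self e, hblock, det_blockDiagonal]
  exact Finset.prod_congr rfl fun c _ => det_one_add_cycle _

theorem mul_sum_add_div_eq {y n r : ℕ} [NeZero y] (g : Fin y → ℕ)
    (hg : ∀ t, g (t + 1) = (g t + n) % r) : r * ∑ t, (g t + n) / r = y * n := by
  have hshift : ∑ t, g (t + 1) = ∑ t, g t := Equiv.sum_comp (Equiv.addRight 1) g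
  have hsum := Finset.sum_congr rfl fun t (_ : t ∈ Finset.univ) => Nat.div_add_mod (g t + n) r
  simp only [← hg, Finset.sum_add_distrib, hshift, ← Finset.mul_sum, Finset.sum_const,
    Finset.card_univ, Fintype.card_fin, smul_eq_mul] at hsum
  omega

theorem stmt_14_general (n r x y s : ℕ) (hr : 2 ≤ r)
    (hx : n = x * s) (hy : r = y * s)
    (hxy : Nat.gcd x y = 1)
    (hpar : (Even x ∧ Odd y) ∨ (Odd x ∧ Even y))
    (Sr : Matrix (Fin r) (Fin r) ℤ)
    (hSr : ∀ i j : Fin r, Sr i j =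
      if (i : ℕ) + 1 = (j : ℕ) then 1
      else if (i : ℕ) = r - 1 ∧ (j : ℕ) = 0 then -1 else 0) :
    (1 + Sr ^ n).det = 2 ^ s := by
  have : NeZero r := ⟨by omega⟩
  have hy0 : y ≠ 0 := by rintro rfl; omega
  have : NeZero y := ⟨hy0⟩
  have hyn : r ∣ y * n := ⟨x, by rw [hx, hy]; ring⟩
  let e : Fin y × Fin s ≃ Fin r := Equiv.ofBijective (orbitIndex n r)
    ((Fintype.bijective_iff_injective_and_card _).2 ⟨orbitIndex_injective hy hx hxy, by simp [hy]⟩)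
  have hS : Sr = negacyclicShift ℤ r 1 :=
    Matrix.ext fun i j => by rw [hSr, negacyclicShift_one_apply]
  have hM : ∀ p j, negacyclicShift ℤ r n (e p) j
      = if j = e (p.1 + 1, p.2) then (-1) ^ (((e p : ℕ) + n) / r) else 0 := by
    rintro ⟨t, c⟩ j
    simp [negacyclicShift, e, Fin.ext_iff, orbitIndex_add_one hyn, eq_comm]
  have hsigns : ∀ c, ∏ t, (-1 : ℤ) ^ (((e (t, c) : ℕ) + n) / r) = (-1) ^ x := by
    intro c
    rw [Finset.prod_pow_eq_pow_sum]
    congr 1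
    apply Nat.eq_of_mul_eq_mul_left (by omega : 0 < r)
    rw [mul_sum_add_div_eq _ fun t => orbitIndex_add_one hyn t c, hx, hy]
    ring
  have heven : Even (y - 1 + x) := by
    rcases hpar with ⟨⟨a, ha⟩, ⟨b, hb⟩⟩ | ⟨⟨a, ha⟩, ⟨b, hb⟩⟩
    all_goals exact ⟨a + b, by omega⟩
  rw [hS, negacyclicShift_one_pow, det_one_add_eq_prod_of_cycles _ e _ hM]
  simp only [hsigns, ← pow_add, heven.neg_one_pow]
  norm_num

/-- with `s = gcd(n,r)`, `n = x·s`, `r = y·s`, `gcd(x,y) = 1`,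
if `x` and `y` have opposite parities then `det(I + S_rⁿ) = 2^s`. -/
theorem stmt_14 (n r x y s : ℕ) (hn : 2 ≤ n) (hr : 2 ≤ r)
    (hs : s = Nat.gcd n r) (hx : n = x * s) (hy : r = y * s)
    (hxy : Nat.gcd x y = 1)
    (hpar : (Even x ∧ Odd y) ∨ (Odd x ∧ Even y))
    (Sr : Matrix (Fin r) (Fin r) ℤ)
    (hSr : ∀ i j : Fin r, Sr i j =
      if (i : ℕ) + 1 = (j : ℕ) then 1
      else if (i : ℕ) = r - 1 ∧ (j : ℕ) = 0 then -1 else 0) :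
    (1 + Sr ^ n).det = 2 ^ s :=
  stmt_14_general n r x y s hr hx hy hxy hpar Sr hSr
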